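/- Fix α ∈ (0,1) and integer N ≥ 2. Let f₀ be the 1-periodic tent function (2x on [0,1/2], 2-2x on (1/2,1]) and F(x) = Σ_{k=0}^∞ N^{-αk} ∫₀ˣ f₀(N^k t) dt. Then F is of class C^{1,α}: F is differentiable with F'(x) = Σ_{k=0}^∞ N^{-αk} f₀(N^k x), and |F'(x) - F'(y)| ≤ (2N/(N^{1-α}-1) + 2N^α/(N^α-1))|x-y|^α. -/
import Mathlib

open MeasureTheory Set Real ENNReal

/-- The 1-periodic tent function (van der Waerden saw tooth). -/
noncomputable def tent (x : ℝ) : ℝ :=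
  if Int.fract x ≤ 1 / 2 then 2 * Int.fract x else 2 - 2 * Int.fract x

lemma round_fract (x : ℝ) :
    (round x : ℝ) = if Int.fract x < 1/2 then x - Int.fract x else x - Int.fract x + 1 := by
  have hx : (⌊x⌋ : ℝ) + Int.fract x = x := Int.floor_add_fract x
  have h0 := Int.fract_nonneg x
  have h1 := Int.fract_lt_one x
  split_ifs with hc
  · have : round x = ⌊x⌋ := by
      rw [round_eq]; apply Int.floor_eq_iff.mpr; constructor <;> push_cast <;> linarith
    rw [this]; linarith
  · push_neg at hc
    have : round x = ⌊x⌋ + 1 := by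
      rw [round_eq]; apply Int.floor_eq_iff.mpr; constructor <;> push_cast <;> linarith
    rw [this]; push_cast; linarith

lemma tent_eq (x : ℝ) : tent x = 2 * |x - round x| := by
  have h0 := Int.fract_nonneg x
  have h1 := Int.fract_lt_one x
  rw [round_fract]
  unfold tent
  split_ifs with h h2 h2
  · rw [abs_of_nonneg (by linarith)]; ring
  · have : Int.fract x = 1/2 := le_antisymm h (le_of_not_gt h2)
    rw [this, show x - (x - 1/2 + 1) = -(1/2 : ℝ) by ring, abs_neg, abs_of_nonneg (by norm_num)]
  · linarith
  · rw [abs_of_nonpos (by linarith)]; ring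

lemma abs_sub_round_le' (x : ℝ) (m : ℤ) : |x - round x| ≤ |x - (m : ℝ)| := by
  rcases le_or_gt (1/2) |x - (m:ℝ)| with hm | hm
  · exact (abs_sub_round x).trans hm
  · have : round x = m := by
      rw [round_eq]; apply Int.floor_eq_iff.mpr
      rw [abs_lt] at hm; constructor <;> push_cast <;> linarith
    rw [this]

lemma tent_nonneg (x : ℝ) : 0 ≤ tent x := by rw [tent_eq]; positivity

lemma tent_le_one (x : ℝ) : tent x ≤ 1 := by
  rw [tent_eq]; have := abs_sub_round x; linarith

lemma tent_le (x : ℝ) (m : ℤ) : tent x ≤ 2 * |x - (m:ℝ)| := by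
  rw [tent_eq]; have := abs_sub_round_le' x m; linarith

lemma tent_lipschitz (x y : ℝ) : |tent x - tent y| ≤ 2 * |x - y| := by
  wlog h : tent y ≤ tent x generalizing x y
  · rw [abs_sub_comm, abs_sub_comm x y]; exact this y x (le_of_not_ge h)
  rw [abs_of_nonneg (by linarith)]
  have h1 : tent x ≤ 2 * |x - (round y : ℝ)| := tent_le x (round y)
  have h2 : tent y = 2 * |y - (round y : ℝ)| := tent_eq y
  have h3 : |x - (round y:ℝ)| ≤ |x - y| + |y - (round y:ℝ)| := abs_sub_le x y _
  linarith

lemma tent_continuous : Continuous tent := by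
  have : LipschitzWith 2 tent := by
    apply LipschitzWith.of_dist_le_mul
    intro x y
    rw [Real.dist_eq, Real.dist_eq]
    simpa using tent_lipschitz x y
  exact this.continuous

lemma tent_abs_sub_le_two (a b : ℝ) : |tent a - tent b| ≤ 2 := by
  have h1 := tent_nonneg a; have h2 := tent_le_one a
  have h3 := tent_nonneg b; have h4 := tent_le_one b
  rw [abs_le]; constructor <;> linarith

section helpers

variable {α : ℝ} {N : ℕ}

lemma coeff_eq_pow (hN0 : (0:ℝ) < N) (k : ℕ) :
    (N : ℝ) ^ (-(α * (k : ℝ))) = ((N : ℝ) ^ (-α)) ^ k := by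
  rw [← Real.rpow_natCast ((N:ℝ) ^ (-α)) k, ← Real.rpow_mul hN0.le,
    show (-α) * (k:ℝ) = -(α * k) by ring]

lemma rpow_helper1 (hN0 : (0:ℝ) < N) (k : ℕ) :
    ((N:ℝ) ^ (-α)) ^ k * (N:ℝ) ^ k = ((N:ℝ) ^ ((1:ℝ) - α)) ^ k := by
  rw [← mul_pow]; congr 1
  nth_rewrite 2 [← Real.rpow_one (N:ℝ)]
  rw [← Real.rpow_add hN0, show -α + 1 = (1:ℝ) - α by ring]

lemma rpow_helper2 (hN0 : (0:ℝ) < N) (K : ℕ) :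
    ((N:ℝ) ^ (-α)) ^ K = (((N:ℝ) ^ K)⁻¹) ^ α := by
  calc ((N:ℝ) ^ (-α)) ^ K = (N:ℝ) ^ ((-α) * (K:ℝ)) := by
        rw [← Real.rpow_natCast ((N:ℝ) ^ (-α)) K, ← Real.rpow_mul hN0.le]
    _ = (N:ℝ) ^ (-((K:ℝ) * α)) := by rw [show (-α) * (K:ℝ) = -((K:ℝ)*α) by ring]
    _ = ((N:ℝ) ^ ((K:ℝ) * α))⁻¹ := Real.rpow_neg hN0.le _
    _ = (((N:ℝ) ^ (K:ℝ)) ^ α)⁻¹ := by rw [Real.rpow_mul hN0.le]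
    _ = (((N:ℝ) ^ K) ^ α)⁻¹ := by rw [Real.rpow_natCast]
    _ = (((N:ℝ) ^ K)⁻¹) ^ α := (Real.inv_rpow (by positivity) α).symm

lemma rpow_helper3 (hN0 : (0:ℝ) < N) (K : ℕ) :
    ((N:ℝ) ^ ((1:ℝ) - α)) ^ K = ((N:ℝ) ^ K) ^ ((1:ℝ) - α) := by
  rw [← Real.rpow_natCast ((N:ℝ) ^ ((1:ℝ)-α)) K, ← Real.rpow_mul hN0.le,
    ← Real.rpow_natCast (N:ℝ) K, ← Real.rpow_mul hN0.le, mul_comm]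

end helpers

/-- The van der Waerden–type saw series `f(x) = Σ_{k≥0} N^{-αk} f₀(N^k x)`. -/
noncomputable def vdwSaw (α : ℝ) (N : ℕ) (x : ℝ) : ℝ :=
  ∑' k : ℕ, (N : ℝ) ^ (-(α * (k : ℝ))) * tent ((N : ℝ) ^ k * x)

/-- The antiderivative `F(x) = Σ_{k≥0} N^{-αk} ∫₀ˣ f₀(N^k t) dt`. -/
noncomputable def vdwF (α : ℝ) (N : ℕ) (x : ℝ) : ℝ :=
  ∑' k : ℕ, (N : ℝ) ^ (-(α * (k : ℝ))) * ∫ t in (0 : ℝ)..x, tent ((N : ℝ) ^ k * t)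

lemma part1 {α : ℝ} {N : ℕ} (hα : α ∈ Set.Ioo (0:ℝ) 1) (hN : 2 ≤ N) (x : ℝ) :
    HasDerivAt (vdwF α N) (vdwSaw α N x) x := by
  obtain ⟨hα0, hα1⟩ := hα
  have hN1 : (1:ℝ) < N := by exact_mod_cast lt_of_lt_of_le Nat.one_lt_two hN
  have hN0 : (0:ℝ) < N := by linarith
  have hr0 : (0:ℝ) ≤ (N:ℝ) ^ (-α) := Real.rpow_nonneg hN0.le _
  have hr1 : (N:ℝ) ^ (-α) < 1 := Real.rpow_lt_one_of_one_lt_of_neg hN1 (by linarith)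
  have hu : Summable (fun k : ℕ => (N:ℝ) ^ (-(α * (k:ℝ)))) := by
    simp_rw [coeff_eq_pow hN0]
    exact summable_geometric_of_lt_one hr0 hr1
  have hg : ∀ (k : ℕ) (y : ℝ), HasDerivAt
      (fun z => (N:ℝ) ^ (-(α * (k:ℝ))) * ∫ t in (0:ℝ)..z, tent ((N:ℝ) ^ k * t))
      ((N:ℝ) ^ (-(α * (k:ℝ))) * tent ((N:ℝ) ^ k * y)) y := by
    intro k y
    have hc : Continuous (fun t : ℝ => tent ((N:ℝ) ^ k * t)) :=
      tent_continuous.comp (continuous_const.mul continuous_id)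
    exact ((hc.integral_hasStrictDerivAt 0 y).hasDerivAt).const_mul _
  have hg' : ∀ (k : ℕ) (y : ℝ),
      ‖(N:ℝ) ^ (-(α * (k:ℝ))) * tent ((N:ℝ) ^ k * y)‖ ≤ (N:ℝ) ^ (-(α * (k:ℝ))) := by
    intro k y
    have hc0 : (0:ℝ) ≤ (N:ℝ) ^ (-(α * (k:ℝ))) := Real.rpow_nonneg hN0.le _
    rw [Real.norm_eq_abs, abs_mul, abs_of_nonneg hc0, abs_of_nonneg (tent_nonneg _)]
    calc (N:ℝ) ^ (-(α * (k:ℝ))) * tent ((N:ℝ) ^ k * y)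
        ≤ (N:ℝ) ^ (-(α * (k:ℝ))) * 1 := by
          exact mul_le_mul_of_nonneg_left (tent_le_one _) hc0
      _ = (N:ℝ) ^ (-(α * (k:ℝ))) := mul_one _
  have hg0 : Summable (fun k : ℕ =>
      (N:ℝ) ^ (-(α * (k:ℝ))) * ∫ t in (0:ℝ)..(0:ℝ), tent ((N:ℝ) ^ k * t)) := by
    simpa using summable_zero
  exact hasDerivAt_tsum hu hg hg' hg0 x

set_option maxHeartbeats 2000000 in
lemma part2 {α : ℝ} {N : ℕ} (hα : α ∈ Set.Ioo (0:ℝ) 1) (hN : 2 ≤ N) (x y : ℝ) :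
    |vdwSaw α N x - vdwSaw α N y|
      ≤ (2 * (N : ℝ) / ((N : ℝ) ^ ((1 : ℝ) - α) - 1)
          + 2 * (N : ℝ) ^ α / ((N : ℝ) ^ α - 1)) * |x - y| ^ α := by
  obtain ⟨hα0, hα1⟩ := hα
  have hN1 : (1:ℝ) < N := by exact_mod_cast lt_of_lt_of_le Nat.one_lt_two hN
  have hN0 : (0:ℝ) < N := by linarith
  set r := (N:ℝ) ^ (-α) with hrdef
  set q := (N:ℝ) ^ ((1:ℝ) - α) with hqdef
  set s := (N:ℝ) ^ α with hsdef
  have hr0 : 0 ≤ r := Real.rpow_nonneg hN0.le _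
  have hr1 : r < 1 := Real.rpow_lt_one_of_one_lt_of_neg hN1 (by linarith)
  have hq1 : 1 < q := (Real.one_lt_rpow_iff_of_pos hN0).mpr (Or.inl ⟨hN1, by linarith⟩)
  have hs1 : 1 < s := (Real.one_lt_rpow_iff_of_pos hN0).mpr (Or.inl ⟨hN1, hα0⟩)
  set h := |x - y| with hhdef
  have hh0 : 0 ≤ h := abs_nonneg _
  have hgeom : Summable (fun k : ℕ => r ^ k) := summable_geometric_of_lt_one hr0 hr1
  set d : ℕ → ℝ := fun k => |tent ((N:ℝ) ^ k * x) - tent ((N:ℝ) ^ k * y)| with hddef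
  have hd0 : ∀ k, 0 ≤ d k := fun k => abs_nonneg _
  have hd2 : ∀ k, d k ≤ 2 := fun k => tent_abs_sub_le_two _ _
  have hdl : ∀ k, d k ≤ 2 * ((N:ℝ) ^ k * h) := by
    intro k
    calc d k ≤ 2 * |(N:ℝ) ^ k * x - (N:ℝ) ^ k * y| := tent_lipschitz _ _
      _ = 2 * ((N:ℝ) ^ k * h) := by
          rw [← mul_sub, abs_mul, abs_of_nonneg (pow_nonneg hN0.le k)]
  have hsum_d : Summable (fun k => r ^ k * d k) := by
    apply Summable.of_nonneg_of_le (fun k => by positivity)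
      (fun k => mul_le_mul_of_nonneg_left (hd2 k) (pow_nonneg hr0 k)) (hgeom.mul_right 2)
  have hsa : Summable (fun k : ℕ => (N:ℝ) ^ (-(α * (k:ℝ))) * tent ((N:ℝ) ^ k * x)) := by
    simp_rw [coeff_eq_pow hN0]
    apply Summable.of_nonneg_of_le (fun k => mul_nonneg (pow_nonneg hr0 k) (tent_nonneg _))
      (fun k => ?_) hgeom
    exact mul_le_of_le_one_right (pow_nonneg hr0 k) (tent_le_one _)
  have hsb : Summable (fun k : ℕ => (N:ℝ) ^ (-(α * (k:ℝ))) * tent ((N:ℝ) ^ k * y)) := by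
    simp_rw [coeff_eq_pow hN0]
    apply Summable.of_nonneg_of_le (fun k => mul_nonneg (pow_nonneg hr0 k) (tent_nonneg _))
      (fun k => ?_) hgeom
    exact mul_le_of_le_one_right (pow_nonneg hr0 k) (tent_le_one _)
  have hdiff : vdwSaw α N x - vdwSaw α N y
      = ∑' k : ℕ, r ^ k * (tent ((N:ℝ) ^ k * x) - tent ((N:ℝ) ^ k * y)) := by
    rw [vdwSaw, vdwSaw, ← Summable.tsum_sub hsa hsb]
    apply tsum_congr
    intro k
    rw [coeff_eq_pow hN0]
    ring
  have hnorm : ∀ k : ℕ, ‖r ^ k * (tent ((N:ℝ) ^ k * x) - tent ((N:ℝ) ^ k * y))‖ = r ^ k * d k := by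
    intro k
    rw [norm_mul, Real.norm_eq_abs, Real.norm_eq_abs, abs_of_nonneg (pow_nonneg hr0 k)]
  have habs : |vdwSaw α N x - vdwSaw α N y| ≤ ∑' k, r ^ k * d k := by
    rw [hdiff, ← Real.norm_eq_abs]
    calc ‖∑' k : ℕ, r ^ k * (tent ((N:ℝ) ^ k * x) - tent ((N:ℝ) ^ k * y))‖
        ≤ ∑' k : ℕ, ‖r ^ k * (tent ((N:ℝ) ^ k * x) - tent ((N:ℝ) ^ k * y))‖ := by
          apply norm_tsum_le_tsum_norm
          simpa only [hnorm] using hsum_d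
      _ = ∑' k, r ^ k * d k := tsum_congr hnorm
  -- trivial case x = y
  rcases eq_or_lt_of_le hh0 with hh | hh0'
  · have hxy : x = y := by
      have : |x - y| = 0 := hh.symm
      rw [abs_eq_zero, sub_eq_zero] at this; exact this
    have hh0'' : h = 0 := hh.symm
    rw [hxy, sub_self, abs_zero, hh0'', Real.zero_rpow (ne_of_gt hα0), mul_zero]
  -- choose K
  obtain ⟨K, hK1, hhead⟩ : ∃ K : ℕ, 1 ≤ (N:ℝ) ^ K * h ∧
      ∑ k ∈ Finset.range K, r ^ k * d k ≤ 2 * (N:ℝ) / (q - 1) * h ^ α := by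
    rcases le_or_gt 1 h with hh1 | hh1
    · refine ⟨0, by simpa using hh1, ?_⟩
      simp only [Finset.range_zero, Finset.sum_empty]
      exact mul_nonneg (div_nonneg (by positivity) (by linarith)) (Real.rpow_nonneg hh0 _)
    · have hex : ∃ k : ℕ, 1 ≤ (N:ℝ) ^ k * h := by
        obtain ⟨k, hk⟩ := pow_unbounded_of_one_lt (1/h) hN1
        refine ⟨k, ?_⟩
        rw [div_lt_iff₀ hh0'] at hk
        nlinarith
      set K := Nat.find hex with hKdef
      have hK1 : 1 ≤ (N:ℝ) ^ K * h := Nat.find_spec hex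
      have hKne : K ≠ 0 := by
        intro h0
        rw [h0] at hK1
        simp at hK1
        linarith
      have hKprev : ¬ (1 ≤ (N:ℝ) ^ (K-1) * h) :=
        Nat.find_min hex (Nat.sub_lt (Nat.pos_of_ne_zero hKne) one_pos)
      push_neg at hKprev
      have hK2 : (N:ℝ) ^ K * h ≤ (N:ℝ) := by
        have hKsp : (N:ℝ) ^ K = (N:ℝ) * (N:ℝ) ^ (K-1) := by
          rw [← pow_succ']
          congr 1
          omega
        rw [hKsp, mul_assoc]
        nlinarith
      refine ⟨K, hK1, ?_⟩
      have hqK : q ^ K = ((N:ℝ) ^ K) ^ ((1:ℝ) - α) := rpow_helper3 hN0 K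
      have key : h * q ^ K ≤ (N:ℝ) * h ^ α := by
        have e1 : h = h ^ α * h ^ ((1:ℝ) - α) := by
          rw [← Real.rpow_add hh0', show α + ((1:ℝ) - α) = (1:ℝ) by ring, Real.rpow_one]
        calc h * q ^ K = h ^ α * (h ^ ((1:ℝ)-α) * ((N:ℝ) ^ K) ^ ((1:ℝ)-α)) := by
              rw [hqK]; nth_rewrite 1 [e1]; ring
          _ = h ^ α * ((h * (N:ℝ) ^ K) ^ ((1:ℝ)-α)) := by
              rw [← Real.mul_rpow hh0 (by positivity)]
          _ ≤ h ^ α * ((N:ℝ) ^ ((1:ℝ)-α)) := by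
              apply mul_le_mul_of_nonneg_left _ (by positivity)
              apply Real.rpow_le_rpow (by positivity) (by nlinarith) (by linarith)
          _ ≤ h ^ α * (N:ℝ) := by
              apply mul_le_mul_of_nonneg_left _ (by positivity)
              calc (N:ℝ) ^ ((1:ℝ)-α) ≤ (N:ℝ) ^ (1:ℝ) :=
                    Real.rpow_le_rpow_of_exponent_le hN1.le (by linarith)
                _ = (N:ℝ) := Real.rpow_one _
          _ = (N:ℝ) * h ^ α := mul_comm _ _
      calc ∑ k ∈ Finset.range K, r ^ k * d k
          ≤ ∑ k ∈ Finset.range K, 2 * h * q ^ k := by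
            apply Finset.sum_le_sum
            intro k _
            have h1 : r ^ k * d k ≤ r ^ k * (2 * ((N:ℝ) ^ k * h)) :=
              mul_le_mul_of_nonneg_left (hdl k) (pow_nonneg hr0 k)
            have h3 : r ^ k * (N:ℝ) ^ k = q ^ k := rpow_helper1 hN0 k
            nlinarith [h1, h3]
        _ = 2 * h * ∑ k ∈ Finset.range K, q ^ k := by rw [Finset.mul_sum]
        _ = 2 * h * ((q ^ K - 1) / (q - 1)) := by rw [geom_sum_eq (ne_of_gt hq1)]
        _ ≤ 2 * h * (q ^ K / (q - 1)) := by
            apply mul_le_mul_of_nonneg_left _ (by positivity)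
            exact (div_le_div_iff_of_pos_right (by linarith)).mpr (by linarith)
        _ = (h * q ^ K) * (2 / (q - 1)) := by ring
        _ ≤ ((N:ℝ) * h ^ α) * (2 / (q - 1)) := by
            apply mul_le_mul_of_nonneg_right key (div_nonneg (by norm_num) (by linarith))
        _ = 2 * (N:ℝ) / (q - 1) * h ^ α := by ring
  -- tail bound
  have hrK : r ^ K ≤ h ^ α := by
    have e2 : r ^ K = (((N:ℝ) ^ K)⁻¹) ^ α := rpow_helper2 hN0 K
    rw [e2]
    apply Real.rpow_le_rpow (by positivity) _ hα0.le
    rw [inv_le_iff_one_le_mul₀ (by positivity)]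
    nlinarith
  have htailsum : Summable (fun k => r ^ (k + K) * d (k + K)) :=
    (summable_nat_add_iff K).mpr hsum_d
  have htail : ∑' k : ℕ, r ^ (k + K) * d (k + K) ≤ 2 * s / (s - 1) * h ^ α := by
    have hb : ∀ k : ℕ, r ^ (k + K) * d (k + K) ≤ (2 * r ^ K) * r ^ k := by
      intro k
      calc r ^ (k + K) * d (k + K) ≤ r ^ (k + K) * 2 :=
            mul_le_mul_of_nonneg_left (hd2 _) (pow_nonneg hr0 _)
        _ = (2 * r ^ K) * r ^ k := by rw [pow_add]; ring
    have hconst : (1 - r)⁻¹ = s / (s - 1) := by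
      have hrs : r = s⁻¹ := by rw [hrdef, hsdef, ← Real.rpow_neg hN0.le]
      have : 1 - r = (s - 1) / s := by rw [hrs]; field_simp
      rw [this, inv_div]
    calc ∑' k : ℕ, r ^ (k + K) * d (k + K) ≤ ∑' k : ℕ, (2 * r ^ K) * r ^ k :=
          Summable.tsum_le_tsum hb htailsum (hgeom.mul_left _)
      _ = (2 * r ^ K) * ∑' k : ℕ, r ^ k := tsum_mul_left
      _ = (2 * r ^ K) * (1 - r)⁻¹ := by rw [tsum_geometric_of_lt_one hr0 hr1]
      _ ≤ (2 * h ^ α) * (1 - r)⁻¹ := by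
          apply mul_le_mul_of_nonneg_right _ (inv_nonneg.mpr (by linarith))
          linarith
      _ = 2 * s / (s - 1) * h ^ α := by rw [hconst]; ring
  calc |vdwSaw α N x - vdwSaw α N y| ≤ ∑' k, r ^ k * d k := habs
    _ = ∑ k ∈ Finset.range K, r ^ k * d k + ∑' k : ℕ, r ^ (k + K) * d (k + K) :=
        (Summable.sum_add_tsum_nat_add K hsum_d).symm
    _ ≤ 2 * (N:ℝ) / (q - 1) * h ^ α + 2 * s / (s - 1) * h ^ α := add_le_add hhead htail
    _ = (2 * (N:ℝ) / (q - 1) + 2 * s / (s - 1)) * h ^ α := by ring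

/-- For `α ∈ (0,1)` and `N ≥ 2`, `F` is of class `C^{1,α}`:
`F' = f` everywhere and `F'` is `α`-Hölder with the explicit constant. -/
theorem vdwF_C1alpha (α : ℝ) (hα : α ∈ Set.Ioo (0 : ℝ) 1) (N : ℕ) (hN : 2 ≤ N) :
    (∀ x : ℝ, HasDerivAt (vdwF α N) (vdwSaw α N x) x) ∧
    ∀ x y : ℝ, |vdwSaw α N x - vdwSaw α N y|
      ≤ (2 * (N : ℝ) / ((N : ℝ) ^ ((1 : ℝ) - α) - 1)
          + 2 * (N : ℝ) ^ α / ((N : ℝ) ^ α - 1)) * |x - y| ^ α :=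
  ⟨fun x => part1 hα hN x, fun x y => part2 hα hN x y⟩
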